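/- Let L be a symmetric n×n matrix over a commutative ring. Then (-1)^n det(L) equals the sum, over all partitions {I_1,…,I_k} of {1,…,n} into nonempty blocks, of (-1)^k ∏_{j=1}^k 𝓘(I_j), where for a block I = {i} one sets 𝓘(I) = L_{i,i}, and for a block I = {i_1,…,i_m} with m > 1 one sets 𝓘(I) = Σ_{σ ∈ S_{m-1}} L_{i_m, i_{σ(1)}} L_{i_{σ(1)}, i_{σ(2)}} ⋯ L_{i_{σ(m-1)}, i_m} (the sum over cyclic chain products through the remaining m−1 indices). -/

import Mathlib

/-!
Grouping the permutations in `det L = det Lᵀ = ∑ σ, sign σ * ∏ i, L i (σ i)` by their cycles gives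
the formula: the orbits of `σ` form a set partition, and the cycles of `σ` on a block `I` with base
point `b ∈ I` correspond to the orderings `l` of `I \ {b}` through `σ = (b :: l).formPerm` on `I`.
Such a cycle contributes the closed chain product `chainProd L b b l` with sign `-(-1) ^ #I`.
The comparison runs over all subsets `S`: the principal minor on `S`, times `(-1) ^ #S`, and the
partition sum on `S` satisfy the same recursion, obtained by splitting off the block containing
`max S` (the base point that `blockInv` uses).
-/

/-- The product of entries along a chain from `i` to `j` passing through the
list `l` of intermediate indices. -/
def chainProd {n : ℕ} {R : Type*} [CommRing R] (L : Matrix (Fin n) (Fin n) R) :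
    Fin n → Fin n → List (Fin n) → R
  | i, j, [] => L i j
  | i, j, a :: l => L i a * chainProd L a j l

/-- The sum, over all orderings of the finite set `I`, of the chain products
from `i` to `j` through that ordering. -/
noncomputable def chainSum {n : ℕ} {R : Type*} [CommRing R] (L : Matrix (Fin n) (Fin n) R)
    (i j : Fin n) (I : Finset (Fin n)) : R :=
  (I.toList.permutations.map (chainProd L i j)).sum

/-- The quantity `𝓘(I)`: for `I = {i}` it is `L i i`, and for `|I| = m > 1`
it is the sum over all orderings of `I \ {i_m}` of the closed chain products
based at a distinguished element `i_m ∈ I` (here chosen as `I.max'`). -/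
noncomputable def blockInv {n : ℕ} {R : Type*} [CommRing R] (L : Matrix (Fin n) (Fin n) R)
    (I : Finset (Fin n)) : R :=
  if h : I.Nonempty then
    chainSum L (I.max' h) (I.max' h) (I.erase (I.max' h))
  else 0

open Equiv Equiv.Perm Finset

namespace DetPartition

section Partition

variable {α : Type*} [DecidableEq α]

def IsPartition (S : Finset α) (P : Finset (Finset α)) : Prop :=
  (∀ I ∈ P, I.Nonempty) ∧ (∀ I ∈ P, ∀ J ∈ P, I ≠ J → Disjoint I J) ∧ P.biUnion id = S

variable {S I : Finset α} {P Q : Finset (Finset α)}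

lemma IsPartition.subset (hP : IsPartition S P) (hI : I ∈ P) : I ⊆ S :=
  hP.2.2 ▸ subset_biUnion_of_mem id hI

lemma IsPartition.exists_mem (hP : IsPartition S P) {b : α} (hb : b ∈ S) : ∃ I ∈ P, b ∈ I := by
  simpa [← hP.2.2] using hb

lemma IsPartition.erase (hP : IsPartition S P) (hI : I ∈ P) : IsPartition (S \ I) (P.erase I) := by
  refine ⟨fun J hJ => hP.1 J (mem_of_mem_erase hJ),
    fun J hJ K hK => hP.2.1 J (mem_of_mem_erase hJ) K (mem_of_mem_erase hK), ?_⟩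
  ext x
  simp only [mem_biUnion, mem_erase, id, mem_sdiff]
  constructor
  · rintro ⟨J, ⟨hJI, hJ⟩, hxJ⟩
    exact ⟨hP.subset hJ hxJ, disjoint_left.mp (hP.2.1 J hJ I hI hJI) hxJ⟩
  · rintro ⟨hxS, hxI⟩
    obtain ⟨J, hJ, hxJ⟩ := hP.exists_mem hxS
    exact ⟨J, ⟨fun h => hxI (h ▸ hxJ), hJ⟩, hxJ⟩

lemma IsPartition.notMem_of_sdiff (hQ : IsPartition (S \ I) Q) (hI : I.Nonempty) : I ∉ Q :=
  fun h => by
    obtain ⟨x, hx⟩ := hI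
    exact (mem_sdiff.mp (hQ.subset h hx)).2 hx

lemma IsPartition.insert (hQ : IsPartition (S \ I) Q) (hIS : I ⊆ S) (hI : I.Nonempty) :
    IsPartition S (insert I Q) := by
  have hdisj : ∀ J ∈ Q, Disjoint I J := fun J hJ =>
    disjoint_left.mpr fun _ hx hxJ => (mem_sdiff.mp (hQ.subset hJ hxJ)).2 hx
  refine ⟨?_, ?_, ?_⟩
  · simpa [hI] using hQ.1
  · simp only [mem_insert]
    rintro J (rfl | hJ) K (rfl | hK) hJK
    exacts [absurd rfl hJK, hdisj K hK, (hdisj J hJ).symm, hQ.2.1 J hJ K hK hJK]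
  · rw [biUnion_insert, hQ.2.2, id, union_sdiff_of_subset hIS]

lemma isPartition_empty_iff : IsPartition ∅ P ↔ P = ∅ := by
  refine ⟨fun hP => eq_empty_of_forall_notMem fun I hI => ?_, fun hP => by simp [hP, IsPartition]⟩
  obtain ⟨x, hx⟩ := hP.1 I hI
  simpa using hP.subset hI hx

lemma sum_isPartition [Fintype α] {M : Type*} [AddCommMonoid M] {b : α} (hb : b ∈ S)
    (f : Finset (Finset α) → M) [DecidablePred (IsPartition S)]
    [∀ I : Finset α, DecidablePred (IsPartition (S \ I))] :
    ∑ P with IsPartition S P, f P =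
      ∑ I ∈ S.powerset with b ∈ I, ∑ Q with IsPartition (S \ I) Q, f (insert I Q) := by
  rw [sum_sigma']
  symm
  refine sum_bij (fun x _ => insert x.1 x.2) ?_ ?_ ?_ (fun _ _ => rfl)
  · rintro ⟨I, Q⟩ h
    simp only [mem_sigma, mem_filter, mem_powerset, mem_univ, true_and] at h ⊢
    exact h.2.insert h.1.1 ⟨b, h.1.2⟩
  · rintro ⟨I, Q⟩ h ⟨I', Q'⟩ h' heq
    simp only [mem_sigma, mem_filter, mem_powerset, mem_univ, true_and] at h h' heq
    have hI : I ∉ Q := h.2.notMem_of_sdiff ⟨b, h.1.2⟩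
    have hI' : I' ∉ Q' := h'.2.notMem_of_sdiff ⟨b, h'.1.2⟩
    obtain rfl : I = I' := by
      rcases mem_insert.mp (heq ▸ mem_insert_self I Q) with h'' | h''
      · exact h''
      · exact absurd (h'.2.subset h'' h.1.2) (by simp [h'.1.2])
    rw [← erase_insert hI, heq, erase_insert hI']
  · intro P hP
    simp only [mem_filter, mem_univ, true_and] at hP
    obtain ⟨I, hI, hbI⟩ := hP.exists_mem hb
    refine ⟨⟨I, P.erase I⟩, ?_, insert_erase hI⟩
    simp only [mem_sigma, mem_filter, mem_powerset, mem_univ, true_and]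
    exact ⟨⟨hP.subset hI, hbI⟩, hP.erase hI⟩

end Partition

section Perm

variable {α : Type*} [DecidableEq α]

noncomputable def orderings (J : Finset α) : Finset (List α) := J.toList.permutations.toFinset

lemma mem_orderings {J : Finset α} {l : List α} : l ∈ orderings J ↔ l.Nodup ∧ l.toFinset = J := by
  rw [orderings, List.mem_toFinset, List.mem_permutations]
  refine ⟨fun h => ⟨h.nodup_iff.mpr J.nodup_toList, by simp [List.toFinset_eq_of_perm _ _ h]⟩,
    fun ⟨hl, hJ⟩ => List.perm_of_nodup_nodup_toFinset_eq hl J.nodup_toList (by simp [hJ])⟩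

lemma mem_orderings_erase {I : Finset α} {b : α} {l : List α} (hbI : b ∈ I) :
    l ∈ orderings (I.erase b) ↔ (b :: l).Nodup ∧ insert b l.toFinset = I := by
  rw [mem_orderings, List.nodup_cons]
  constructor
  · rintro ⟨hnd, hl⟩
    exact ⟨⟨by simp [← List.mem_toFinset, hl], hnd⟩, by rw [hl, insert_erase hbI]⟩
  · rintro ⟨⟨hbl, hnd⟩, hI⟩
    exact ⟨hnd, by rw [← hI, erase_insert (by simpa using hbl)]⟩

lemma map_formPerm_self {l : List α} (hl : l.Nodup) : l.map l.formPerm = l.rotate 1 :=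
  List.ext_getElem (by simp) fun i _ _ => by
    rw [List.getElem_map, List.formPerm_apply_getElem _ hl, List.getElem_rotate]

variable [Fintype α] {M : Type*} [AddCommMonoid M] {S I : Finset α} {b : α}

lemma mem_permsOfFinset_iff_support_subset {σ : Perm α} :
    σ ∈ permsOfFinset S ↔ σ.support ⊆ S := by
  simp [mem_perms_of_finset_iff, subset_iff]

lemma cycleOf_cycleOf_self (σ : Perm α) (b : α) : (σ.cycleOf b).cycleOf b = σ.cycleOf b := by
  by_cases hb : σ b = b
  · simp [(cycleOf_eq_one_iff σ).mpr hb]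
  · exact (isCycle_cycleOf σ hb).cycleOf_eq (by rwa [cycleOf_apply_self])

lemma cycleOf_mul_of_disjoint {c τ : Perm α} (hc : c.cycleOf b = c)
    (hτ : Disjoint (insert b c.support) τ.support) : (c * τ).cycleOf b = c := by
  have hτb : τ b = b := notMem_support.mp (disjoint_left.mp hτ (mem_insert_self _ _))
  have hdisj : c.Disjoint τ :=
    disjoint_iff_disjoint_support.mpr (disjoint_of_subset_left (subset_insert _ _) hτ)
  rw [hdisj.cycleOf_mul_distrib, hc, (cycleOf_eq_one_iff τ).mpr hτb, mul_one]

lemma support_inv_cycleOf_mul_subset {σ : Perm α} (hσ : σ.support ⊆ S) :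
    ((σ.cycleOf b)⁻¹ * σ).support ⊆ S \ insert b (σ.cycleOf b).support := by
  intro x hx
  have hσx : σ x ≠ σ.cycleOf b x := by
    rwa [mem_support, Perm.mul_apply, Ne, inv_eq_iff_eq] at hx
  have hcases : σ.cycleOf b x = σ x ∨ σ.cycleOf b x = x := by
    rw [cycleOf_apply]; split_ifs <;> simp
  refine mem_sdiff.mpr ⟨hσ (mem_support.mpr fun hfix => ?_), fun hxI => ?_⟩
  · exact hcases.elim (fun h => hσx h.symm) (fun h => hσx (hfix.trans h.symm))
  · rcases mem_insert.mp hxI with rfl | hxc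
    · exact hσx (cycleOf_apply_self σ x).symm
    · exact hcases.elim (fun h => hσx h.symm) (mem_support.mp hxc)

lemma sum_permsOfFinset_eq_sum_cycleOf (b : α) (f : Perm α → M) :
    ∑ σ ∈ permsOfFinset S, f σ =
      ∑ c ∈ permsOfFinset S with c.cycleOf b = c,
        ∑ τ ∈ permsOfFinset (S \ insert b c.support), f (c * τ) := by
  rw [sum_sigma']
  refine sum_nbij' (fun σ => ⟨σ.cycleOf b, (σ.cycleOf b)⁻¹ * σ⟩) (fun x => x.1 * x.2)
    ?_ ?_ ?_ ?_ (fun σ _ => by simp)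
  · intro σ hσ
    simp only [mem_sigma, mem_filter, mem_permsOfFinset_iff_support_subset] at hσ ⊢
    exact ⟨⟨(support_cycleOf_le σ b).trans hσ, cycleOf_cycleOf_self σ b⟩,
      support_inv_cycleOf_mul_subset hσ⟩
  · rintro ⟨c, τ⟩ h
    simp only [mem_sigma, mem_filter, mem_permsOfFinset_iff_support_subset] at h ⊢
    refine (support_mul_le c τ).trans (union_subset h.1.1 ?_)
    exact h.2.trans sdiff_subset
  · intro σ _
    simp
  · rintro ⟨c, τ⟩ h
    simp only [mem_sigma, mem_filter, mem_permsOfFinset_iff_support_subset] at h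
    have hcτ : (c * τ).cycleOf b = c :=
      cycleOf_mul_of_disjoint h.1.2 (disjoint_of_subset_right h.2 disjoint_sdiff)
    simp [hcτ]

section formPerm

variable {l : List α}

lemma insert_support_formPerm_cons (hl : (b :: l).Nodup) :
    insert b (b :: l).formPerm.support = insert b l.toFinset := by
  cases l with
  | nil => simp
  | cons y l =>
    rw [List.support_formPerm_of_nodup _ hl (by simp), List.toFinset_cons, insert_idem]

lemma cycleOf_formPerm_cons (hl : (b :: l).Nodup) :
    (b :: l).formPerm.cycleOf b = (b :: l).formPerm := by
  cases l with
  | nil => exact (cycleOf_eq_one_iff _).mpr rfl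
  | cons y l =>
    refine (List.isCycle_formPerm hl (by simp)).cycleOf_eq ?_
    rw [List.formPerm_apply_head _ _ _ hl]
    exact fun h => (List.nodup_cons.mp hl).1 (h ▸ List.mem_cons_self)

lemma tail_toList_formPerm_cons (hl : (b :: l).Nodup) : ((b :: l).formPerm.toList b).tail = l := by
  cases l with
  | nil => simp
  | cons y l => simpa using congrArg List.tail (toList_formPerm_nontrivial _ (by simp) hl)

end formPerm

lemma toFinset_toList (c : Perm α) (b : α) : (c.toList b).toFinset = (c.cycleOf b).support := by
  ext y
  rw [List.mem_toFinset, mem_toList_iff, mem_support_cycleOf_iff]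

lemma cons_tail_toList {c : Perm α} (hb : b ∈ c.support) : b :: (c.toList b).tail = c.toList b := by
  have hne : c.toList b ≠ [] := by simpa [toList_eq_nil_iff] using hb
  have hhead : (c.toList b).head hne = b := by
    rw [List.head_eq_getElem]
    exact toList_getElem_zero c b hb
  nth_rewrite 1 [← hhead]
  exact List.cons_head_tail hne

lemma eq_one_of_cycleOf_eq_self_of_notMem {c : Perm α} (hc : c.cycleOf b = c) (hb : b ∉ c.support) :
    c = 1 :=
  hc.symm.trans ((cycleOf_eq_one_iff c).mpr (notMem_support.mp hb))

lemma formPerm_cons_tail_toList {c : Perm α} (hc : c.cycleOf b = c) :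
    (b :: (c.toList b).tail).formPerm = c := by
  by_cases hb : b ∈ c.support
  · rw [cons_tail_toList hb, formPerm_toList, hc]
  · simp [eq_one_of_cycleOf_eq_self_of_notMem hc hb]

lemma tail_toList_mem_orderings {c : Perm α} (hc : c.cycleOf b = c) :
    (c.toList b).tail ∈ orderings ((insert b c.support).erase b) := by
  rw [mem_orderings_erase (mem_insert_self _ _)]
  by_cases hb : b ∈ c.support
  · rw [← List.toFinset_cons, cons_tail_toList hb, toFinset_toList, hc]
    exact ⟨nodup_toList c b, (insert_eq_of_mem hb).symm⟩
  · simp [eq_one_of_cycleOf_eq_self_of_notMem hc hb]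

lemma sum_cycleOf_eq_sum_orderings (hb : b ∈ S) (g : Finset α → Perm α → M) :
    ∑ c ∈ permsOfFinset S with c.cycleOf b = c, g (insert b c.support) c =
      ∑ I ∈ S.powerset with b ∈ I, ∑ l ∈ orderings (I.erase b), g I (b :: l).formPerm := by
  rw [sum_sigma']
  symm
  refine sum_nbij' (fun x => (b :: x.2).formPerm) (fun c => ⟨insert b c.support, (c.toList b).tail⟩)
    ?_ ?_ ?_ ?_ ?_
  · rintro ⟨I, l⟩ h
    simp only [mem_sigma, mem_filter, mem_powerset] at h
    obtain ⟨hnd, hI⟩ := (mem_orderings_erase h.1.2).mp h.2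
    simp only [mem_filter, mem_permsOfFinset_iff_support_subset]
    refine ⟨?_, cycleOf_formPerm_cons hnd⟩
    calc (b :: l).formPerm.support ⊆ insert b (b :: l).formPerm.support := subset_insert _ _
      _ = I := (insert_support_formPerm_cons hnd).trans hI
      _ ⊆ S := h.1.1
  · intro c h
    simp only [mem_filter, mem_permsOfFinset_iff_support_subset] at h
    simp only [mem_sigma, mem_filter, mem_powerset, mem_insert_self, and_true]
    exact ⟨insert_subset hb h.1, tail_toList_mem_orderings h.2⟩
  · rintro ⟨I, l⟩ h
    simp only [mem_sigma, mem_filter, mem_powerset] at h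
    obtain ⟨hnd, hI⟩ := (mem_orderings_erase h.1.2).mp h.2
    rw [insert_support_formPerm_cons hnd, hI, tail_toList_formPerm_cons hnd]
  · intro c h
    simp only [mem_filter] at h
    exact formPerm_cons_tail_toList h.2
  · rintro ⟨I, l⟩ h
    simp only [mem_sigma, mem_filter, mem_powerset] at h
    obtain ⟨hnd, hI⟩ := (mem_orderings_erase h.1.2).mp h.2
    rw [insert_support_formPerm_cons hnd, hI]

lemma sum_permsOfFinset_eq_sum_orderings (hb : b ∈ S) (f : Perm α → M) :
    ∑ σ ∈ permsOfFinset S, f σ =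
      ∑ I ∈ S.powerset with b ∈ I, ∑ l ∈ orderings (I.erase b),
        ∑ τ ∈ permsOfFinset (S \ I), f ((b :: l).formPerm * τ) := by
  rw [sum_permsOfFinset_eq_sum_cycleOf b,
    sum_cycleOf_eq_sum_orderings hb (fun I c => ∑ τ ∈ permsOfFinset (S \ I), f (c * τ))]

lemma sign_formPerm_of_nodup {l : List α} (hl : l.Nodup) (hne : l ≠ []) :
    sign l.formPerm = -(-1) ^ l.length := by
  rcases l with _ | ⟨x, _ | ⟨y, l⟩⟩
  · exact absurd rfl hne
  · simp
  · rw [(List.isCycle_formPerm hl (by simp)).sign, List.support_formPerm_of_nodup _ hl (by simp),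
      List.toFinset_card_of_nodup hl]

lemma prod_apply_mul_of_support_subset {N : Type*} [CommMonoid N] (f : α → α → N)
    {c τ : Perm α} (hIS : I ⊆ S) (hc : c.support ⊆ I) (hτ : τ.support ⊆ S \ I) :
    ∏ i ∈ S, f i ((c * τ) i) = (∏ i ∈ I, f i (c i)) * ∏ i ∈ S \ I, f i (τ i) := by
  have hcτ : Commute c τ := (disjoint_iff_disjoint_support.mpr
    (disjoint_of_subset_left hc (disjoint_of_subset_right hτ disjoint_sdiff))).commute
  rw [← prod_sdiff hIS, mul_comm]
  congr 1 <;> refine prod_congr rfl fun i hi => ?_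
  · rw [Perm.mul_apply, notMem_support.mp fun h => (mem_sdiff.mp (hτ h)).2 hi]
  · rw [hcτ.eq, Perm.mul_apply, notMem_support.mp fun h => (mem_sdiff.mp hi).2 (hc h)]

end Perm

section Minor

variable {α R : Type*} [DecidableEq α] [Fintype α] [CommRing R] (A : Matrix α α R)
  {S : Finset α} {b : α}

/-- The determinant of the principal submatrix of `A` on the rows and columns in `S`. -/
def detOn (S : Finset α) : R :=
  ∑ σ ∈ permsOfFinset S, ((sign σ : ℤ) : R) * ∏ i ∈ S, A i (σ i)

lemma detOn_univ : detOn A univ = A.det := by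
  have huniv : permsOfFinset (univ : Finset α) = univ := by
    ext σ
    simp [mem_perms_of_finset_iff]
  rw [← Matrix.det_transpose, Matrix.det_apply', detOn, huniv]
  rfl

lemma detOn_empty : detOn A ∅ = 1 := by
  have hempty : permsOfFinset (∅ : Finset α) = {1} := by
    ext σ
    simp [mem_permsOfFinset_iff_support_subset]
  simp [detOn, hempty]

lemma detOn_eq_sum_blocks (hb : b ∈ S) :
    detOn A S = ∑ I ∈ S.powerset with b ∈ I,
      -(-1) ^ #I * (∑ l ∈ orderings (I.erase b), ∏ i ∈ I, A i ((b :: l).formPerm i)) *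
        detOn A (S \ I) := by
  rw [detOn, sum_permsOfFinset_eq_sum_orderings hb]
  refine sum_congr rfl fun I hI => ?_
  rw [mem_filter, mem_powerset] at hI
  rw [mul_sum, sum_mul]
  refine sum_congr rfl fun l hl => ?_
  obtain ⟨hnd, hbl⟩ := (mem_orderings_erase hI.2).mp hl
  have hc : (b :: l).formPerm.support ⊆ I := by
    simpa [hbl] using List.support_formPerm_le (b :: l)
  have hcard : #I = (b :: l).length := by
    rw [← hbl, ← List.toFinset_cons, List.toFinset_card_of_nodup hnd]
  rw [detOn, mul_sum]
  refine sum_congr rfl fun τ hτ => ?_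
  rw [mem_permsOfFinset_iff_support_subset] at hτ
  rw [Perm.sign_mul, sign_formPerm_of_nodup hnd (List.cons_ne_nil _ _),
    prod_apply_mul_of_support_subset (A · ·) hI.1 hc hτ, hcard]
  push_cast
  ring

end Minor

section Fin

variable {n : ℕ} {R : Type*} [CommRing R] (L : Matrix (Fin n) (Fin n) R) {S : Finset (Fin n)}

lemma chainProd_eq_prod_zipWith (i j : Fin n) (l : List (Fin n)) :
    chainProd L i j l = ((i :: l).zipWith (fun x y => L x y) (l ++ [j])).prod := by
  induction l generalizing i with
  | nil => simp [chainProd]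
  | cons a l ih => simp [chainProd, ih]

lemma prod_formPerm_cons {b : Fin n} {l : List (Fin n)} (hl : (b :: l).Nodup) :
    ∏ i ∈ (b :: l).toFinset, L i ((b :: l).formPerm i) = chainProd L b b l := by
  have hrot : l ++ [b] = (b :: l).map (b :: l).formPerm := by simp [map_formPerm_self hl]
  rw [List.prod_toFinset _ hl, chainProd_eq_prod_zipWith, hrot, List.zipWith_map_right,
    List.zipWith_self]

lemma blockInv_eq_sum_orderings {I : Finset (Fin n)} (hS : S.Nonempty) (hIS : I ⊆ S)
    (hI : S.max' hS ∈ I) :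
    blockInv L I = ∑ l ∈ orderings (I.erase (S.max' hS)),
      ∏ i ∈ I, L i ((S.max' hS :: l).formPerm i) := by
  have hmax : I.max' ⟨_, hI⟩ = S.max' hS :=
    le_antisymm (max'_le _ _ _ fun y hy => le_max' S y (hIS hy)) (le_max' I _ hI)
  rw [blockInv, dif_pos ⟨_, hI⟩, hmax, chainSum, orderings,
    ← List.sum_toFinset _ (List.nodup_permutations _ (nodup_toList _))]
  refine sum_congr rfl fun l hl => ?_
  obtain ⟨hnd, hbl⟩ := (mem_orderings_erase hI).mp hl
  rw [← prod_formPerm_cons L hnd, List.toFinset_cons, hbl]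

lemma detOn_eq_sum_blockInv (hS : S.Nonempty) :
    detOn L S = ∑ I ∈ S.powerset with S.max' hS ∈ I,
      -(-1) ^ #I * blockInv L I * detOn L (S \ I) := by
  rw [detOn_eq_sum_blocks L (S.max'_mem hS)]
  refine sum_congr rfl fun I hI => ?_
  rw [mem_filter, mem_powerset] at hI
  rw [blockInv_eq_sum_orderings L hS hI.1 hI.2]

open Classical in
noncomputable def partitionSum (S : Finset (Fin n)) : R :=
  ∑ P with IsPartition S P, (-1) ^ #P * ∏ I ∈ P, blockInv L I

lemma partitionSum_empty : partitionSum L ∅ = 1 := by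
  simp [partitionSum, isPartition_empty_iff, sum_filter]

lemma partitionSum_eq_sum_blockInv (hS : S.Nonempty) :
    partitionSum L S =
      ∑ I ∈ S.powerset with S.max' hS ∈ I, -blockInv L I * partitionSum L (S \ I) := by
  classical
  rw [partitionSum, sum_isPartition (S.max'_mem hS) fun P => (-1 : R) ^ #P * ∏ I ∈ P, blockInv L I]
  refine sum_congr rfl fun I hI => ?_
  rw [partitionSum, mul_sum]
  refine sum_congr rfl fun Q hQ => ?_
  have hIQ : I ∉ Q := (mem_filter.mp hQ).2.notMem_of_sdiff ⟨_, (mem_filter.mp hI).2⟩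
  rw [card_insert_of_notMem hIQ, prod_insert hIQ]
  ring

lemma partitionSum_eq_neg_one_pow_mul_detOn (S : Finset (Fin n)) :
    partitionSum L S = (-1) ^ #S * detOn L S := by
  induction S using Finset.strongInduction with
  | H S ih =>
    rcases S.eq_empty_or_nonempty with rfl | hS
    · simp [partitionSum_empty, detOn_empty]
    rw [partitionSum_eq_sum_blockInv L hS, detOn_eq_sum_blockInv L hS, mul_sum]
    refine sum_congr rfl fun I hI => ?_
    rw [mem_filter, mem_powerset] at hI
    have hsq : (-1 : R) ^ #I * (-1) ^ #I = 1 := by rw [← mul_pow]; norm_num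
    rw [ih _ (sdiff_ssubset hI.1 ⟨_, hI.2⟩), ← card_sdiff_add_card_eq_card hI.1, pow_add]
    linear_combination (-1) ^ #(S \ I) * blockInv L I * detOn L (S \ I) * hsq

end Fin

end DetPartition

open Classical in
theorem stmt_1_general {n : ℕ} {R : Type*} [CommRing R] (L : Matrix (Fin n) (Fin n) R) :
    (-1 : R) ^ n * L.det =
      ∑ P ∈ Finset.univ.filter (fun P : Finset (Finset (Fin n)) =>
          (∀ I ∈ P, I.Nonempty) ∧ (∀ I ∈ P, ∀ J ∈ P, I ≠ J → Disjoint I J) ∧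
          P.biUnion id = Finset.univ),
        (-1 : R) ^ P.card * ∏ I ∈ P, blockInv L I := by
  have hn : (-1 : R) ^ n = (-1) ^ #(Finset.univ : Finset (Fin n)) := by simp
  rw [hn, ← DetPartition.detOn_univ, ← DetPartition.partitionSum_eq_neg_one_pow_mul_detOn,
    DetPartition.partitionSum]
  simp only [DetPartition.IsPartition]
  congr

open Classical in
/-- `(-1)^n det L` equals the sum over all partitions `{I₁,…,I_k}` of
`{1,…,n}` into nonempty blocks of `(-1)^k ∏_j 𝓘(I_j)`. -/
theorem stmt_1 {n : ℕ} {R : Type*} [CommRing R] (L : Matrix (Fin n) (Fin n) R)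
    (hL : L.IsSymm) :
    (-1 : R) ^ n * L.det =
      ∑ P ∈ Finset.univ.filter (fun P : Finset (Finset (Fin n)) =>
          (∀ I ∈ P, I.Nonempty) ∧ (∀ I ∈ P, ∀ J ∈ P, I ≠ J → Disjoint I J) ∧
          P.biUnion id = Finset.univ),
        (-1 : R) ^ P.card * ∏ I ∈ P, blockInv L I :=
  stmt_1_general L
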